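/- arXiv:2212.06901 — 2 statements merged into one kernel-verified Lean document; each statement's English description precedes it below -/
import Mathlib

section
/- Let Γ be a connected finite simple graph and let χ : A(Γ) → ℝ be a nonzero character. Let L(χ) be the full subgraph of Γ induced on the vertices v with χ(v) ≠ 0, and let D(χ) be the full subgraph induced on the vertices v with χ(v) = 0. Then the following are equivalent: (1) L(χ) is not connected, or L(χ) is not dominating (i.e., some vertex of Γ outside L(χ) has no neighbor in L(χ)); (2) there exists a full subgraph Λ of Γ contained in D(χ) that separates Γ. -/
def raagRels {V : Type} (G : SimpleGraph V) : Set (FreeGroup V) :=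
  {r | ∃ v w : V, G.Adj v w ∧
    r = FreeGroup.of v * FreeGroup.of w * (FreeGroup.of v)⁻¹ * (FreeGroup.of w)⁻¹}

/-- The right-angled Artin group of a simple graph. -/
abbrev RAAG {V : Type} (G : SimpleGraph V) : Type := PresentedGroup (raagRels G)

/-- The canonical generator of `RAAG G` corresponding to a vertex. -/
def raagGen {V : Type} (G : SimpleGraph V) (v : V) : RAAG G :=
  PresentedGroup.of (rels := raagRels G) v

/-- The homomorphism `A(Γ) → ℤ` sending every vertex generator to `1`. -/
def bbgChar {V : Type} (G : SimpleGraph V) : RAAG G →* Multiplicative ℤ :=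
  PresentedGroup.toGroup (f := fun _ : V => Multiplicative.ofAdd (1 : ℤ)) (by
    rintro r ⟨v, w, -, rfl⟩
    simp only [map_mul, map_inv, FreeGroup.lift_apply_of]
    group)

/-- The Bestvina–Brady group of a simple graph, as a subgroup of the RAAG. -/
def BBG {V : Type} (G : SimpleGraph V) : Subgroup (RAAG G) := (bbgChar G).ker

/-!
Write `L` for the live vertices and `D = Lᶜ` for the dead ones (`χ v = 1` in the multiplicative
encoding of characters); `L` is nonempty because `χ` is nontrivial. If `L` is disconnected,
`D` itself separates `Γ`. If a dead vertex `v` has no live neighbour, `D \ {v}` separates `Γ`: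
what remains is `L ∪ {v}` with `v` isolated. Conversely, if `L` is connected and dominating,
deleting any set of dead vertices leaves `L` together with dead vertices each adjacent to `L`,
which is connected.
-/

namespace SimpleGraph

variable {V : Type*} (G : SimpleGraph V)

lemma connected_induce_of_dominating_subset {L T : Set V} (hL : (G.induce L).Connected)
    (hdom : ∀ v ∉ L, ∃ w ∈ L, G.Adj v w) (hLT : L ⊆ T) : (G.induce T).Connected := by
  obtain ⟨⟨u, hu⟩⟩ := hL.nonempty
  refine G.induce_connected_of_patches u (hLT hu) fun {v} hv => ?_
  by_cases hvL : v ∈ L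
  · exact ⟨L, hLT, hu, hvL, hL.preconnected _ _⟩
  obtain ⟨w, hwL, hvw⟩ := hdom v hvL
  have hT : L ∪ {w, v} ⊆ T := by
    simp only [Set.union_subset_iff, Set.insert_subset_iff, Set.singleton_subset_iff]
    exact ⟨hLT, hLT hwL, hv⟩
  have hconn : (G.induce (L ∪ {w, v})).Connected :=
    G.induce_union_connected hL.preconnected (G.induce_pair_connected_of_adj hvw.symm).preconnected
      ⟨w, hwL, Set.mem_insert w _⟩
  exact ⟨L ∪ {w, v}, hT, Or.inl hu, Or.inr (by simp), hconn.preconnected _ _⟩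

lemma not_connected_induce_insert_of_forall_not_adj {L : Set V} {u v : V} (hu : u ∈ L)
    (hv : v ∉ L) (hiso : ∀ w ∈ L, ¬G.Adj v w) : ¬(G.induce (insert v L)).Connected := by
  intro hconn
  obtain ⟨p⟩ := hconn.preconnected ⟨v, Set.mem_insert v L⟩ ⟨u, Set.mem_insert_of_mem v hu⟩
  cases p with
  | nil => exact hv (by simpa using hu)
  | @cons _ x _ hvx _ =>
    have hvx' : G.Adj v x.1 := hvx
    exact hiso x.1 (x.2.resolve_left (G.ne_of_adj hvx').symm) hvx'

theorem exists_subset_not_connected_induce_compl_iff {D : Set V} (hD : Dᶜ.Nonempty) :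
    (¬(G.induce Dᶜ).Connected ∨ ¬∀ v ∈ D, ∃ w ∉ D, G.Adj v w) ↔
      ∃ S ⊆ D, ¬(G.induce Sᶜ).Connected := by
  obtain ⟨u, hu⟩ := hD
  constructor
  · rintro (hL | hdom)
    · exact ⟨D, subset_rfl, hL⟩
    push Not at hdom
    obtain ⟨v, hvD, hiso⟩ := hdom
    refine ⟨D \ {v}, Set.sdiff_subset, ?_⟩
    rw [Set.compl_sdiff, Set.singleton_union]
    exact G.not_connected_induce_insert_of_forall_not_adj hu (not_not.mpr hvD) hiso
  · rintro ⟨S, hSD, hS⟩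
    contrapose! hS
    exact G.connected_induce_of_dominating_subset hS.1
      (fun v hv => hS.2 v (not_not.mp hv)) (Set.compl_subset_compl.mpr hSD)

end SimpleGraph

lemma exists_map_raagGen_ne_one {V : Type} {G : SimpleGraph V} {H : Type*} [Group H]
    {f : RAAG G →* H} (hf : f ≠ 1) : ∃ v : V, f (raagGen G v) ≠ 1 := by
  by_contra! h
  exact hf (PresentedGroup.ext h)

theorem stmt_16_general {V : Type} (G : SimpleGraph V)
    (χ : RAAG G →* Multiplicative ℝ) (hχ : χ ≠ 1) :
    (¬(G.induce {v : V | χ (raagGen G v) ≠ 1}).Connected ∨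
      ¬(∀ v : V, χ (raagGen G v) = 1 → ∃ w : V, χ (raagGen G w) ≠ 1 ∧ G.Adj v w)) ↔
    (∃ S : Set V, S ⊆ {v : V | χ (raagGen G v) = 1} ∧ ¬(G.induce Sᶜ).Connected) :=
  G.exists_subset_not_connected_induce_compl_iff (D := {v : V | χ (raagGen G v) = 1})
    (exists_map_raagGen_ne_one hχ)

/-- For a nonzero character `χ` of `A(Γ)` on a connected graph `Γ`: the living subgraph
(induced on vertices with `χ(v) ≠ 0`) is disconnected or non-dominating iff some full
subgraph of the dead subgraph (induced on vertices with `χ(v) = 0`) separates `Γ`. -/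
theorem stmt_16 {V : Type} [Fintype V] (G : SimpleGraph V) (hG : G.Connected)
    (χ : RAAG G →* Multiplicative ℝ) (hχ : χ ≠ 1) :
    (¬(G.induce {v : V | χ (raagGen G v) ≠ 1}).Connected ∨
      ¬(∀ v : V, χ (raagGen G v) = 1 → ∃ w : V, χ (raagGen G w) ≠ 1 ∧ G.Adj v w)) ↔
    (∃ S : Set V, S ⊆ {v : V | χ (raagGen G v) = 1} ∧ ¬(G.induce Sᶜ).Connected) :=
  stmt_16_general G χ hχ
end

section
/- Let n ≥ 2 and let W₁, W₂, W₃ be linear subspaces of ℝⁿ with W₁ ⊆ {y₁ = 0}, W₂ ⊆ {y₂ = 0}, and W₃ ⊆ {y₁ − y₂ = 0}. If {W₁,W₂,W₃} is a redundant triple of subspaces, i.e., ξ ∉ K₁₂ + K₁₃ + K₂₃, then dim(W₁ + W₂ + W₃) + 1 ≤ dim W₁ + dim W₂ + dim W₃ − dim(W₁∩W₂) − dim(W₁∩W₃) − dim(W₂∩W₃) + dim(W₁∩W₂∩W₃); in particular, the triple does not satisfy the inclusion–exclusion principle for dimensions. -/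
/-- The `i`-th standard basis vector of `ℝⁿ`. -/
noncomputable def eVec (n : ℕ) (i : Fin n) : EuclideanSpace ℝ (Fin n) :=
  EuclideanSpace.single i 1

/-- `u ↦ (u, -u, 0)`. -/
noncomputable def emb12 (n : ℕ) :
    EuclideanSpace ℝ (Fin n) →ₗ[ℝ]
      EuclideanSpace ℝ (Fin n) × EuclideanSpace ℝ (Fin n) × EuclideanSpace ℝ (Fin n) :=
  LinearMap.prod LinearMap.id (LinearMap.prod (-LinearMap.id) 0)

/-- `u ↦ (u, 0, -u)`. -/
noncomputable def emb13 (n : ℕ) :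
    EuclideanSpace ℝ (Fin n) →ₗ[ℝ]
      EuclideanSpace ℝ (Fin n) × EuclideanSpace ℝ (Fin n) × EuclideanSpace ℝ (Fin n) :=
  LinearMap.prod LinearMap.id (LinearMap.prod 0 (-LinearMap.id))

/-- `u ↦ (0, u, -u)`. -/
noncomputable def emb23 (n : ℕ) :
    EuclideanSpace ℝ (Fin n) →ₗ[ℝ]
      EuclideanSpace ℝ (Fin n) × EuclideanSpace ℝ (Fin n) × EuclideanSpace ℝ (Fin n) :=
  LinearMap.prod 0 (LinearMap.prod LinearMap.id (-LinearMap.id))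

/-- `K₁₂ = {(u, -u, 0) : u ∈ W₁^⊥ ∩ W₂^⊥}`. -/
noncomputable def K12 (n : ℕ) (W1 W2 : Submodule ℝ (EuclideanSpace ℝ (Fin n))) :
    Submodule ℝ (EuclideanSpace ℝ (Fin n) × EuclideanSpace ℝ (Fin n) × EuclideanSpace ℝ (Fin n)) :=
  (W1ᗮ ⊓ W2ᗮ).map (emb12 n)

/-- `K₁₃ = {(u, 0, -u) : u ∈ W₁^⊥ ∩ W₃^⊥}`. -/
noncomputable def K13 (n : ℕ) (W1 W3 : Submodule ℝ (EuclideanSpace ℝ (Fin n))) :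
    Submodule ℝ (EuclideanSpace ℝ (Fin n) × EuclideanSpace ℝ (Fin n) × EuclideanSpace ℝ (Fin n)) :=
  (W1ᗮ ⊓ W3ᗮ).map (emb13 n)

/-- `K₂₃ = {(0, u, -u) : u ∈ W₂^⊥ ∩ W₃^⊥}`. -/
noncomputable def K23 (n : ℕ) (W2 W3 : Submodule ℝ (EuclideanSpace ℝ (Fin n))) :
    Submodule ℝ (EuclideanSpace ℝ (Fin n) × EuclideanSpace ℝ (Fin n) × EuclideanSpace ℝ (Fin n)) :=
  (W2ᗮ ⊓ W3ᗮ).map (emb23 n)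

/-- The vector `ξ = (-e₁, e₂, e₁ - e₂)`, where `i, j` play the roles of the indices `1, 2`. -/
noncomputable def xiVec (n : ℕ) (i j : Fin n) :
    EuclideanSpace ℝ (Fin n) × EuclideanSpace ℝ (Fin n) × EuclideanSpace ℝ (Fin n) :=
  (-(eVec n i), eVec n j, eVec n i - eVec n j)

/-!
Put `Vᵢ = Wᵢᗮ`. The hypotheses on the `Wᵢ` mean that `ξ = (a, b, c)` is a linear relation
`a + b + c = 0` with `a ∈ V₁`, `b ∈ V₂`, `c ∈ V₃`. These relations form a space of dimension
`Σ dim Vᵢ - dim (V₁ + V₂ + V₃)`, containing the "trivial" relations `K₁₂ + K₁₃ + K₂₃` coming from the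
pairwise intersections, whose dimension is `Σ dim (Vᵢ ∩ Vⱼ) - dim (V₁ ∩ V₂ ∩ V₃)`. Since `ξ` is not
trivial, the inclusion–exclusion defect of `(V₁, V₂, V₃)` is positive, and passing to orthogonal
complements does not change this defect.
-/

namespace Submodule

open Module

variable {K M : Type*} [Field K] [AddCommGroup M] [Module K M]

def linearRelations (V₁ V₂ V₃ : Submodule K M) : Submodule K (M × M × M) :=
  (LinearMap.ker (V₁.subtype.coprod (V₂.subtype.coprod V₃.subtype))).map
    (V₁.subtype.prodMap (V₂.subtype.prodMap V₃.subtype))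

def trivialRelations (V₁ V₂ V₃ : Submodule K M) : Submodule K (M × M × M) :=
  (V₁ ⊓ V₂).map (LinearMap.id.prod ((-LinearMap.id).prod 0)) +
    (V₁ ⊓ V₃).map (LinearMap.id.prod (LinearMap.prod 0 (-LinearMap.id))) +
    (V₂ ⊓ V₃).map (LinearMap.prod 0 (LinearMap.id.prod (-LinearMap.id)))

noncomputable def inclusionExclusionDefect (V₁ V₂ V₃ : Submodule K M) : ℤ :=
  (finrank K V₁ + finrank K V₂ + finrank K V₃ : ℤ)
    - finrank K ↥(V₁ ⊓ V₂) - finrank K ↥(V₁ ⊓ V₃) - finrank K ↥(V₂ ⊓ V₃)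
    + finrank K ↥(V₁ ⊓ V₂ ⊓ V₃) - finrank K ↥(V₁ ⊔ V₂ ⊔ V₃)

variable {V₁ V₂ V₃ : Submodule K M}

theorem mem_linearRelations {a b c : M} :
    (a, b, c) ∈ linearRelations V₁ V₂ V₃ ↔ a ∈ V₁ ∧ b ∈ V₂ ∧ c ∈ V₃ ∧ a + b + c = 0 := by
  constructor
  · rintro ⟨⟨a', b', c'⟩, hker, hx⟩
    simp only [Prod.mk.injEq, LinearMap.prodMap_apply, coe_subtype] at hx
    obtain ⟨rfl, rfl, rfl⟩ := hx
    simp only [SetLike.mem_coe, LinearMap.mem_ker, LinearMap.coprod_apply, coe_subtype] at hker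
    exact ⟨a'.2, b'.2, c'.2, by rw [add_assoc, hker]⟩
  · rintro ⟨ha, hb, hc, h⟩
    refine ⟨(⟨a, ha⟩, ⟨b, hb⟩, ⟨c, hc⟩), ?_, rfl⟩
    simpa [add_assoc] using h

theorem trivialRelations_le_linearRelations :
    trivialRelations V₁ V₂ V₃ ≤ linearRelations V₁ V₂ V₃ := by
  refine sup_le (sup_le ?_ ?_) ?_ <;> rintro - ⟨u, hu, rfl⟩ <;>
    simpa [mem_linearRelations] using hu

variable [FiniteDimensional K M]

variable (V₁ V₂ V₃) in
theorem finrank_linearRelations_add_finrank_sup :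
    finrank K (linearRelations V₁ V₂ V₃) + finrank K ↥(V₁ ⊔ V₂ ⊔ V₃) =
      finrank K V₁ + finrank K V₂ + finrank K V₃ := by
  set sum := V₁.subtype.coprod (V₂.subtype.coprod V₃.subtype)
  have hinj : Function.Injective (V₁.subtype.prodMap (V₂.subtype.prodMap V₃.subtype)) :=
    Prod.map_injective.2 ⟨V₁.injective_subtype,
      Prod.map_injective.2 ⟨V₂.injective_subtype, V₃.injective_subtype⟩⟩
  have hker : finrank K (linearRelations V₁ V₂ V₃) = finrank K (LinearMap.ker sum) :=
    (equivMapOfInjective _ hinj _).symm.finrank_eq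
  have hrange : LinearMap.range sum = V₁ ⊔ V₂ ⊔ V₃ := by
    simp [sum, LinearMap.range_coprod, sup_assoc]
  have := LinearMap.finrank_range_add_finrank_ker sum
  rw [hrange, finrank_prod, finrank_prod] at this
  omega

variable (V₁ V₂ V₃) in
theorem finrank_inf_add_le_finrank_trivialRelations_add :
    finrank K ↥(V₁ ⊓ V₂) + finrank K ↥(V₁ ⊓ V₃) + finrank K ↥(V₂ ⊓ V₃) ≤
      finrank K (trivialRelations V₁ V₂ V₃) + finrank K ↥(V₁ ⊓ V₂ ⊓ V₃) := by
  -- `g (u, v, w) = (u + v, w - u, -v - w)`; its kernel is `{(x, -x, x) | x ∈ V₁ ⊓ V₂ ⊓ V₃}`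
  set g : ↥(V₁ ⊓ V₂) × ↥(V₁ ⊓ V₃) × ↥(V₂ ⊓ V₃) →ₗ[K] M × M × M :=
    ((LinearMap.id.prod ((-LinearMap.id).prod 0)).comp (V₁ ⊓ V₂).subtype).coprod
      (((LinearMap.id.prod (LinearMap.prod 0 (-LinearMap.id))).comp (V₁ ⊓ V₃).subtype).coprod
        ((LinearMap.prod 0 (LinearMap.id.prod (-LinearMap.id))).comp (V₂ ⊓ V₃).subtype))
  set h : ↥(V₁ ⊓ V₂ ⊓ V₃) →ₗ[K] ↥(V₁ ⊓ V₂) × ↥(V₁ ⊓ V₃) × ↥(V₂ ⊓ V₃) :=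
    (inclusion inf_le_left).prod
      ((-inclusion (le_inf (inf_le_left.trans inf_le_left) inf_le_right)).prod
        (inclusion (le_inf (inf_le_left.trans inf_le_right) inf_le_right)))
  have hrange : LinearMap.range g = trivialRelations V₁ V₂ V₃ := by
    simp [g, trivialRelations, LinearMap.range_coprod, LinearMap.range_comp, sup_assoc]
  have hker : LinearMap.ker g ≤ LinearMap.range h := by
    rintro ⟨u, v, w⟩ hg
    simp only [LinearMap.mem_ker, g, LinearMap.coprod_apply, LinearMap.coe_comp, coe_subtype,
      Function.comp_apply, LinearMap.prod_apply, LinearMap.id_coe, Function.prod_apply, id_eq,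
      LinearMap.coe_neg, Pi.neg_apply, LinearMap.zero_apply, Prod.mk_add_mk, add_zero, zero_add,
      Prod.ext_iff, Prod.fst_zero, Prod.snd_zero] at hg
    obtain ⟨huv, huw, -⟩ := hg
    have hv : (v : M) = -u := eq_neg_of_add_eq_zero_right huv
    have hw : (w : M) = u := (neg_add_eq_zero.1 huw).symm
    refine ⟨⟨u, u.2, hw ▸ w.2.2⟩, ?_⟩
    ext <;> simp [h, hv, hw]
  have := LinearMap.finrank_range_add_finrank_ker g
  rw [hrange, finrank_prod, finrank_prod] at this
  have := (finrank_mono hker).trans (LinearMap.finrank_range_le h)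
  omega

theorem one_le_inclusionExclusionDefect {x : M × M × M} (hx : x ∈ linearRelations V₁ V₂ V₃)
    (hx' : x ∉ trivialRelations V₁ V₂ V₃) : 1 ≤ inclusionExclusionDefect V₁ V₂ V₃ := by
  have hlt : trivialRelations V₁ V₂ V₃ < linearRelations V₁ V₂ V₃ :=
    lt_of_le_of_ne trivialRelations_le_linearRelations fun h => hx' (h ▸ hx)
  have := finrank_lt_finrank_of_lt hlt
  have := finrank_linearRelations_add_finrank_sup V₁ V₂ V₃
  have := finrank_inf_add_le_finrank_trivialRelations_add V₁ V₂ V₃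
  unfold inclusionExclusionDefect
  omega

section InnerProductSpace

variable {𝕜 E : Type*} [RCLike 𝕜] [NormedAddCommGroup E] [InnerProductSpace 𝕜 E]
  [FiniteDimensional 𝕜 E]

theorem finrank_sup_add_finrank_inf_orthogonal (V W : Submodule 𝕜 E) :
    finrank 𝕜 ↥(V ⊔ W) + finrank 𝕜 ↥(Vᗮ ⊓ Wᗮ) = finrank 𝕜 E := by
  rw [inf_orthogonal]
  exact finrank_add_finrank_orthogonal _

theorem inclusionExclusionDefect_orthogonal (V₁ V₂ V₃ : Submodule 𝕜 E) :
    inclusionExclusionDefect V₁ᗮ V₂ᗮ V₃ᗮ = inclusionExclusionDefect V₁ V₂ V₃ := by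
  have h₁ := finrank_add_finrank_orthogonal V₁
  have h₂ := finrank_add_finrank_orthogonal V₂
  have h₃ := finrank_add_finrank_orthogonal V₃
  have h₁₂ := finrank_sup_add_finrank_inf_orthogonal V₁ V₂
  have h₁₃ := finrank_sup_add_finrank_inf_orthogonal V₁ V₃
  have h₂₃ := finrank_sup_add_finrank_inf_orthogonal V₂ V₃
  have hsup := finrank_sup_add_finrank_inf_orthogonal (V₁ ⊔ V₂) V₃
  rw [← inf_orthogonal] at hsup
  have hinf := finrank_sup_add_finrank_inf_orthogonal (V₁ᗮ ⊔ V₂ᗮ) V₃ᗮ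
  rw [← inf_orthogonal, orthogonal_orthogonal, orthogonal_orthogonal,
    orthogonal_orthogonal] at hinf
  have := finrank_sup_add_finrank_inf_eq V₁ V₂
  have := finrank_sup_add_finrank_inf_eq V₁ V₃
  have := finrank_sup_add_finrank_inf_eq V₂ V₃
  unfold inclusionExclusionDefect
  omega

end InnerProductSpace

end Submodule

open Submodule

theorem K12_add_K13_add_K23 {n : ℕ} (W1 W2 W3 : Submodule ℝ (EuclideanSpace ℝ (Fin n))) :
    K12 n W1 W2 + K13 n W1 W3 + K23 n W2 W3 = trivialRelations W1ᗮ W2ᗮ W3ᗮ :=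
  rfl

theorem inner_eVec {n : ℕ} (i : Fin n) (x : EuclideanSpace ℝ (Fin n)) :
    inner ℝ (eVec n i) x = x i := by
  simp [eVec, EuclideanSpace.inner_single_left]

theorem eVec_mem_orthogonal {n : ℕ} {W : Submodule ℝ (EuclideanSpace ℝ (Fin n))} {i : Fin n}
    (hW : ∀ x ∈ W, x i = 0) : eVec n i ∈ Wᗮ :=
  (mem_orthogonal' _ _).2 fun x hx => (inner_eVec i x).trans (hW x hx)

theorem eVec_sub_eVec_mem_orthogonal {n : ℕ} {W : Submodule ℝ (EuclideanSpace ℝ (Fin n))}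
    {i j : Fin n} (hW : ∀ x ∈ W, x i - x j = 0) : eVec n i - eVec n j ∈ Wᗮ :=
  (mem_orthogonal' _ _).2 fun x hx => by rw [inner_sub_left, inner_eVec, inner_eVec, hW x hx]

/-- A redundant triple of subspaces fails the inclusion–exclusion principle for dimensions:
`dim(W₁+W₂+W₃) + 1 ≤ dim W₁ + dim W₂ + dim W₃ - dim(W₁∩W₂) - dim(W₁∩W₃) - dim(W₂∩W₃)
+ dim(W₁∩W₂∩W₃)`. -/
theorem stmt_18 (n : ℕ) (hn : 2 ≤ n)
    (W1 W2 W3 : Submodule ℝ (EuclideanSpace ℝ (Fin n)))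
    (hW1 : ∀ x ∈ W1, x ⟨0, by omega⟩ = 0)
    (hW2 : ∀ x ∈ W2, x ⟨1, by omega⟩ = 0)
    (hW3 : ∀ x ∈ W3, x ⟨0, by omega⟩ - x ⟨1, by omega⟩ = 0)
    (hred : xiVec n ⟨0, by omega⟩ ⟨1, by omega⟩ ∉
      K12 n W1 W2 + K13 n W1 W3 + K23 n W2 W3) :
    (Module.finrank ℝ ↥(W1 ⊔ W2 ⊔ W3) : ℤ) + 1 ≤
      (Module.finrank ℝ ↥W1 : ℤ) + (Module.finrank ℝ ↥W2 : ℤ) + (Module.finrank ℝ ↥W3 : ℤ)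
        - (Module.finrank ℝ ↥(W1 ⊓ W2) : ℤ) - (Module.finrank ℝ ↥(W1 ⊓ W3) : ℤ)
        - (Module.finrank ℝ ↥(W2 ⊓ W3) : ℤ)
        + (Module.finrank ℝ ↥(W1 ⊓ W2 ⊓ W3) : ℤ) := by
  have hξ : xiVec n ⟨0, by omega⟩ ⟨1, by omega⟩ ∈ linearRelations W1ᗮ W2ᗮ W3ᗮ :=
    mem_linearRelations.2 ⟨neg_mem (eVec_mem_orthogonal hW1), eVec_mem_orthogonal hW2,
      eVec_sub_eVec_mem_orthogonal hW3, by abel⟩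
  rw [K12_add_K13_add_K23] at hred
  have hdefect := one_le_inclusionExclusionDefect hξ hred
  rw [inclusionExclusionDefect_orthogonal] at hdefect
  unfold inclusionExclusionDefect at hdefect
  omega
end
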